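/- arXiv:1503.03359 — 3 statements merged into one kernel-verified Lean document; each statement's English description precedes it below -/
import Mathlib

section
/- Let ε ∈ [0,1) and let ρ*_ε = max over p ∈ [0,1/2] of H_b(p)/(p + 1/(1-ε)). Then the supremum over δ ∈ [0,1] of the quantity (1-ε)·H_b(δ) - δ·(1-ε)·ρ*_ε equals ρ*_ε. -/
/-- Binary entropy function (base 2), with the convention `0 * log 0 = 0`. -/
noncomputable def Hb (p : ℝ) : ℝ := -p * Real.logb 2 p - (1 - p) * Real.logb 2 (1 - p)

lemma Hb_symm (p : ℝ) : Hb (1 - p) = Hb p := by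
  simp only [Hb, sub_sub_cancel]; ring

/-- Let ε ∈ [0,1) and let `ρ` be the maximum of `H_b(p)/(p + 1/(1-ε))` over p ∈ [0,1/2],
attained at `pε`. Then the supremum over δ ∈ [0,1] of `(1-ε)·H_b(δ) - δ·(1-ε)·ρ`
equals `ρ`. -/
theorem sup_over_unit_interval (ε ρ pε : ℝ) (hε0 : 0 ≤ ε) (hε1 : ε < 1)
    (hpε : pε ∈ Set.Icc (0 : ℝ) (1 / 2))
    (hmax : ∀ q ∈ Set.Icc (0 : ℝ) (1 / 2),
      Hb q / (q + 1 / (1 - ε)) ≤ Hb pε / (pε + 1 / (1 - ε)))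
    (hρ : ρ = Hb pε / (pε + 1 / (1 - ε))) :
    sSup ((fun δ => (1 - ε) * Hb δ - δ * (1 - ε) * ρ) '' Set.Icc (0 : ℝ) 1) = ρ := by
  obtain ⟨hp0, hp2⟩ := hpε
  have hc : (0:ℝ) < 1 - ε := by linarith
  have hcpos : (0:ℝ) < 1 / (1 - ε) := by positivity
  have hden : (0:ℝ) < pε + 1 / (1 - ε) := by linarith
  have hρ0 : 0 ≤ ρ := by
    have h := hmax 0 ⟨le_refl 0, by norm_num⟩
    have h0 : Hb 0 = 0 := by simp [Hb]
    rw [h0, zero_div] at h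
    rw [hρ]
    simpa using h
  -- key bound: for all δ ∈ [0,1], Hb δ ≤ ρ * (δ + 1/(1-ε))
  have key : ∀ δ ∈ Set.Icc (0:ℝ) 1, Hb δ ≤ ρ * (δ + 1/(1-ε)) := by
    intro δ ⟨hd0, hd1⟩
    by_cases hhalf : δ ≤ 1/2
    · have h := hmax δ ⟨hd0, hhalf⟩
      rw [← hρ] at h
      have hd : (0:ℝ) < δ + 1/(1-ε) := by linarith
      exact (div_le_iff₀ hd).mp h
    · push_neg at hhalf
      set q := 1 - δ with hq
      have hq0 : (0:ℝ) ≤ q := by linarith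
      have hq2 : q ≤ 1/2 := by rw [hq]; linarith
      have h := hmax q ⟨hq0, hq2⟩
      rw [← hρ] at h
      have hdq : (0:ℝ) < q + 1/(1-ε) := by linarith
      have h1 : Hb q ≤ ρ * (q + 1/(1-ε)) := (div_le_iff₀ hdq).mp h
      have h2 : Hb δ = Hb q := (Hb_symm δ).symm
      have h3 : ρ * (q + 1/(1-ε)) ≤ ρ * (δ + 1/(1-ε)) := by
        apply mul_le_mul_of_nonneg_left _ hρ0
        rw [hq]; linarith
      linarith
  apply IsGreatest.csSup_eq
  constructor
  · refine ⟨pε, ⟨hp0, by linarith⟩, ?_⟩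
    have hHb : Hb pε = ρ * (pε + 1/(1-ε)) := by
      rw [hρ]; field_simp
    simp only [hHb]
    field_simp
    ring
  · rintro x ⟨δ, hδ, rfl⟩
    show (1 - ε) * Hb δ - δ * (1 - ε) * ρ ≤ ρ
    have h := key δ hδ
    have : (1 - ε) * Hb δ ≤ (1 - ε) * (ρ * (δ + 1/(1-ε))) :=
      mul_le_mul_of_nonneg_left h (le_of_lt hc)
    have hone : (1 - ε) * (1/(1-ε)) = 1 := by field_simp
    nlinarith
end

section
/- Let ε ∈ [0,1), let ρ*_ε = max over p ∈ [0,1/2] of H_b(p)/(p + 1/(1-ε)), and let p_ε be the corresponding maximizer. Then for every z ∈ [0, p_ε], the supremum over δ ∈ [0, z] of (1-ε)·H_b(δ) - δ·(1-ε)·ρ*_ε equals (1-ε)·H_b(z) - z·(1-ε)·ρ*_ε. -/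
open Set

lemma Hb_eq_binEntropy (p : ℝ) : Hb p = (Real.log 2)⁻¹ * Real.binEntropy p := by
  unfold Hb Real.binEntropy Real.logb
  rw [Real.log_inv, Real.log_inv]
  ring

lemma concaveOn_Hb : ConcaveOn ℝ (Icc 0 1) Hb := by
  simpa only [funext Hb_eq_binEntropy, smul_eq_mul] using
    Real.strictConcave_binEntropy.concaveOn.smul (inv_nonneg.2 (Real.log_nonneg one_le_two))

lemma IsMaxOn.sub_mul_of_div {f : ℝ → ℝ} {s : Set ℝ} {c p : ℝ} (hpos : ∀ q ∈ s, 0 < q + c)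
    (hmax : IsMaxOn (fun q => f q / (q + c)) s p) (hp : p ∈ s) :
    IsMaxOn (fun q => f q - q * (f p / (p + c))) s p := by
  rw [isMaxOn_iff] at hmax ⊢
  intro q hq
  have hq_le : f q ≤ f p / (p + c) * (q + c) := (div_le_iff₀ (hpos q hq)).1 (hmax q hq)
  have hp_eq : f p = f p / (p + c) * (p + c) := (div_mul_cancel₀ _ (hpos p hp).ne').symm
  linarith

lemma ConcaveOn.monotoneOn_of_isMaxOn {f : ℝ → ℝ} {s : Set ℝ} {m : ℝ} (hf : ConcaveOn ℝ s f)
    (hmax : IsMaxOn f s m) (hm : m ∈ s) : MonotoneOn f (s ∩ Iic m) := by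
  rintro x ⟨hxs, -⟩ y ⟨-, hym⟩ hxy
  have hy : y ∈ segment ℝ x m := by rw [segment_eq_Icc (hxy.trans hym)]; exact ⟨hxy, hym⟩
  have hmin := hf.min_le_of_mem_segment hxs hm hy
  rwa [min_eq_left (hmax hxs)] at hmin

theorem sup_up_to_z_general (ε ρ pε : ℝ) (hε1 : ε < 1)
    (hpε : pε ∈ Set.Icc (0 : ℝ) (1 / 2))
    (hmax : ∀ q ∈ Set.Icc (0 : ℝ) (1 / 2),
      Hb q / (q + 1 / (1 - ε)) ≤ Hb pε / (pε + 1 / (1 - ε)))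
    (hρ : ρ = Hb pε / (pε + 1 / (1 - ε))) :
    ∀ z ∈ Set.Icc (0 : ℝ) pε,
      sSup ((fun δ => (1 - ε) * Hb δ - δ * (1 - ε) * ρ) '' Set.Icc (0 : ℝ) z)
        = (1 - ε) * Hb z - z * (1 - ε) * ρ := by
  rintro z ⟨hz0, hzp⟩
  have hε : 0 < 1 - ε := by linarith
  have hpos : ∀ q ∈ Icc (0 : ℝ) (1 / 2), 0 < q + 1 / (1 - ε) := fun q hq => by
    have := hq.1; positivity
  have hgmax : IsMaxOn (fun q => Hb q - q * ρ) (Icc 0 (1 / 2)) pε :=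
    hρ ▸ IsMaxOn.sub_mul_of_div hpos hmax hpε
  have hgconc : ConcaveOn ℝ (Icc 0 (1 / 2)) (fun q => Hb q - q * ρ) :=
    (concaveOn_Hb.subset (Icc_subset_Icc_right (by norm_num)) (convex_Icc 0 _)).sub
      ((LinearMap.mulRight ℝ ρ).convexOn (convex_Icc 0 _))
  have hgmono : MonotoneOn (fun q => Hb q - q * ρ) (Icc 0 z) :=
    (hgconc.monotoneOn_of_isMaxOn hgmax hpε).mono fun δ hδ =>
      ⟨⟨hδ.1, hδ.2.trans (hzp.trans hpε.2)⟩, hδ.2.trans hzp⟩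
  have hmono : MonotoneOn (fun δ => (1 - ε) * Hb δ - δ * (1 - ε) * ρ) (Icc 0 z) :=
    fun a ha b hb hab => by
      nlinarith [mul_le_mul_of_nonneg_left (hgmono ha hb hab) hε.le]
  exact (hmono.map_isGreatest (isGreatest_Icc hz0)).csSup_eq

/-- Let ε ∈ [0,1) and let `ρ` be the maximum of `H_b(p)/(p + 1/(1-ε))` over p ∈ [0,1/2],
attained at `pε`. Then for every z ∈ [0, pε], the supremum over δ ∈ [0, z] of
`(1-ε)·H_b(δ) - δ·(1-ε)·ρ` equals `(1-ε)·H_b(z) - z·(1-ε)·ρ`. -/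
theorem sup_up_to_z (ε ρ pε : ℝ) (hε0 : 0 ≤ ε) (hε1 : ε < 1)
    (hpε : pε ∈ Set.Icc (0 : ℝ) (1 / 2))
    (hmax : ∀ q ∈ Set.Icc (0 : ℝ) (1 / 2),
      Hb q / (q + 1 / (1 - ε)) ≤ Hb pε / (pε + 1 / (1 - ε)))
    (hρ : ρ = Hb pε / (pε + 1 / (1 - ε))) :
    ∀ z ∈ Set.Icc (0 : ℝ) pε,
      sSup ((fun δ => (1 - ε) * Hb δ - δ * (1 - ε) * ρ) '' Set.Icc (0 : ℝ) z)
        = (1 - ε) * Hb z - z * (1 - ε) * ρ :=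
  sup_up_to_z_general ε ρ pε hε1 hpε hmax hρ
end

section
/- For erasure probability ε = 0, the feedback capacity expression equals the logarithm of the golden ratio: max over p ∈ [0,1/2] of H_b(p)/(p + 1) = log₂((1 + √5)/2), and the maximum is attained at p = (3 - √5)/2. -/
/-!
Gibbs' inequality bounds the binary entropy `H(q)` (in nats) by the cross entropy
`-q log s - (1 - q) log (1 - s)` against any `s ∈ (0, 1)`. Against `s = φ⁻²`, for which
`1 - s = φ⁻¹` because `φ² = φ + 1`, the cross entropy is `(2q + (1 - q)) log φ = (q + 1) log φ`.
Hence `H(q) / (q + 1) ≤ log φ` for every `q ∈ [0, 1]`, with equality at `q = φ⁻² = (3 - √5)/2`.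
-/

open Real goldenRatio

namespace Real

noncomputable def binCrossEntropy (p s : ℝ) : ℝ := -(p * log s) - (1 - p) * log (1 - s)

lemma binEntropy_eq_binCrossEntropy_self (p : ℝ) : binEntropy p = binCrossEntropy p p := by
  simp only [binEntropy, binCrossEntropy, log_inv]
  ring

lemma mul_log_le_mul_log_add_sub {x y : ℝ} (hx : 0 ≤ x) (hy : 0 < y) :
    x * log y ≤ x * log x + (y - x) := by
  rcases hx.eq_or_lt with rfl | hx
  · simpa using hy.le
  have h := mul_le_mul_of_nonneg_left (log_le_sub_one_of_pos (div_pos hy hx)) hx.le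
  have hrhs : x * (y / x - 1) = y - x := by field_simp
  rw [log_div hy.ne' hx.ne', hrhs] at h
  linarith

lemma binEntropy_le_binCrossEntropy {p s : ℝ} (hp₀ : 0 ≤ p) (hp₁ : p ≤ 1) (hs₀ : 0 < s)
    (hs₁ : s < 1) : binEntropy p ≤ binCrossEntropy p s := by
  have h₀ := mul_log_le_mul_log_add_sub hp₀ hs₀
  have h₁ := mul_log_le_mul_log_add_sub (sub_nonneg.2 hp₁) (sub_pos.2 hs₁)
  rw [binEntropy_eq_binCrossEntropy_self, binCrossEntropy, binCrossEntropy]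
  linarith

lemma goldenRatio_inv_sq_eq : φ⁻¹ ^ 2 = (3 - √5) / 2 := by
  rw [inv_goldenRatio, neg_sq, goldenConj_sq]
  ring

lemma one_sub_goldenRatio_inv_sq : 1 - φ⁻¹ ^ 2 = φ⁻¹ := by
  rw [inv_goldenRatio, neg_sq, goldenConj_sq]
  ring

lemma goldenRatio_inv_sq_mem_Icc : φ⁻¹ ^ 2 ∈ Set.Icc (0 : ℝ) (1 / 2) := by
  have h : 2⁻¹ < φ⁻¹ := inv_strictAnti₀ goldenRatio_pos goldenRatio_lt_two
  refine ⟨sq_nonneg _, ?_⟩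
  linarith [one_sub_goldenRatio_inv_sq]

lemma binCrossEntropy_goldenRatio_inv_sq (q : ℝ) :
    binCrossEntropy q (φ⁻¹ ^ 2) = (q + 1) * log φ := by
  rw [binCrossEntropy, one_sub_goldenRatio_inv_sq, log_pow, log_inv]
  push_cast
  ring

lemma binEntropy_le_mul_log_goldenRatio {q : ℝ} (hq₀ : 0 ≤ q) (hq₁ : q ≤ 1) :
    binEntropy q ≤ (q + 1) * log φ := by
  rw [← binCrossEntropy_goldenRatio_inv_sq]
  exact binEntropy_le_binCrossEntropy hq₀ hq₁ (by positivity)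
    (by linarith [goldenRatio_inv_sq_mem_Icc.2])

lemma binEntropy_goldenRatio_inv_sq : binEntropy (φ⁻¹ ^ 2) = (φ⁻¹ ^ 2 + 1) * log φ := by
  rw [binEntropy_eq_binCrossEntropy_self, binCrossEntropy_goldenRatio_inv_sq]

end Real

lemma Hb_eq_binEntropy_div_log_two (p : ℝ) : Hb p = binEntropy p / log 2 := by
  simp only [Hb, logb, binEntropy, log_inv]
  ring

lemma Hb_div_add_one_le_logb_goldenRatio {q : ℝ} (hq₀ : 0 ≤ q) (hq₁ : q ≤ 1) :
    Hb q / (q + 1) ≤ logb 2 φ := by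
  rw [Hb_eq_binEntropy_div_log_two, div_right_comm, logb]
  gcongr
  rw [div_le_iff₀ (by linarith)]
  linarith [binEntropy_le_mul_log_goldenRatio hq₀ hq₁]

lemma Hb_goldenRatio_inv_sq_div_add_one : Hb (φ⁻¹ ^ 2) / (φ⁻¹ ^ 2 + 1) = logb 2 φ := by
  rw [Hb_eq_binEntropy_div_log_two, div_right_comm, binEntropy_goldenRatio_inv_sq,
    mul_div_cancel_left₀ _ (by positivity), logb]

/-- For ε = 0, the feedback capacity expression equals the log of the golden ratio:
`max_{p ∈ [0,1/2]} H_b(p)/(p + 1) = log₂((1 + √5)/2)`, attained at `p = (3 - √5)/2`. -/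
theorem capacity_at_zero_erasure :
    ((3 - Real.sqrt 5) / 2 ∈ Set.Icc (0 : ℝ) (1 / 2)) ∧
    (∀ q ∈ Set.Icc (0 : ℝ) (1 / 2),
      Hb q / (q + 1) ≤ Hb ((3 - Real.sqrt 5) / 2) / ((3 - Real.sqrt 5) / 2 + 1)) ∧
    Hb ((3 - Real.sqrt 5) / 2) / ((3 - Real.sqrt 5) / 2 + 1)
      = Real.logb 2 ((1 + Real.sqrt 5) / 2) := by
  rw [← goldenRatio_inv_sq_eq, Hb_goldenRatio_inv_sq_div_add_one]
  exact ⟨goldenRatio_inv_sq_mem_Icc,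
    fun q hq ↦ Hb_div_add_one_le_logb_goldenRatio hq.1 (hq.2.trans (by norm_num)), rfl⟩
end
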